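/- Let R : ℝ → ℝ be locally integrable with polynomial growth, and ψ a Schwartz function. If |∫ R(t) ψ(x-t) dt| ≫ x^α, then for any β > 0, X^{-β} ∫_X^{X + X^β} |R(t)| dt ≫ X^α; that is, the averaged lower bound holds over intervals of length X^β for any β > 0. -/

import Mathlib

/-!
For `x` in the middle part `(X + H, X + X ^ β - H]` of the window, with `H = X ^ (β / 2)`,
integrate the lower bound `C x ^ α ≤ ∫ |R t| |ψ (x - t)| dt` over `x` and swap the integrals.
The part `t ∈ (X, X + X ^ β]` contributes at most `‖ψ‖₁ ∫_X^{X + X ^ β} |R|`. For the other `t`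
we have `|x - t| ≥ H`, and the Schwartz decay of `ψ` beats the polynomial growth of `R`
(Peetre's inequality `1 + |t| ≤ (1 + |x|) (1 + |x - t|)`), so this part is `o(X ^ β)`, hence
negligible against `C X ^ α X ^ β / 2`.
-/

open MeasureTheory Real Filter Set
open scoped ENNReal Topology

theorem SchwartzMap.exists_one_add_norm_pow_mul_norm_le {E F : Type*} [NormedAddCommGroup E]
    [NormedSpace ℝ E] [NormedAddCommGroup F] [NormedSpace ℝ F] (f : SchwartzMap E F) (k : ℕ) :
    ∃ D, ∀ x, (1 + ‖x‖) ^ k * ‖f x‖ ≤ D :=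
  ⟨_, fun x => by
    simpa using f.one_add_le_sup_seminorm_apply (𝕜 := ℝ) (m := (k, 0)) le_rfl le_rfl x⟩

theorem lintegral_lintegral_sub_le {G : Type*} [MeasurableSpace G] [AddGroup G]
    [MeasurableAdd₂ G] [MeasurableNeg G] {μ : Measure G} [SFinite μ] [μ.IsAddRightInvariant]
    {f g k : G → ℝ≥0∞} (hf : AEMeasurable f μ) (hg : Measurable g) (hk : AEMeasurable k μ)
    {s I : Set G} (hI : MeasurableSet I) (hfgk : ∀ t ∉ I, ∀ x ∈ s, f t * g (x - t) ≤ k t) :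
    ∫⁻ x in s, ∫⁻ t, f t * g (x - t) ∂μ ∂μ
      ≤ (∫⁻ t in I, f t ∂μ) * (∫⁻ u, g u ∂μ) + μ s * ∫⁻ t, k t ∂μ := by
  have hfg : AEMeasurable (Function.uncurry fun x t => f t * g (x - t)) ((μ.restrict s).prod μ) :=
    hf.comp_snd.mul (hg.comp measurable_sub).aemeasurable
  rw [lintegral_lintegral_swap hfg, ← lintegral_add_compl _ hI]
  gcongr
  · calc ∫⁻ t in I, ∫⁻ x in s, f t * g (x - t) ∂μ ∂μ
        ≤ ∫⁻ t in I, f t * ∫⁻ x, g (x - t) ∂μ ∂μ := by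
          gcongr with t
          rw [← lintegral_const_mul (f t) (f := fun x => g (x - t))
            (hg.comp (measurable_sub_const t))]
          exact setLIntegral_le_lintegral _ _
      _ = (∫⁻ t in I, f t ∂μ) * ∫⁻ u, g u ∂μ := by
          simp_rw [lintegral_sub_right_eq_self g]
          exact lintegral_mul_const'' _ hf.restrict
  · calc ∫⁻ t in Iᶜ, ∫⁻ x in s, f t * g (x - t) ∂μ ∂μ
        ≤ ∫⁻ t in Iᶜ, ∫⁻ _ in s, k t ∂μ ∂μ :=
          setLIntegral_mono' hI.compl fun t ht => setLIntegral_mono measurable_const (hfgk t ht)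
      _ ≤ ∫⁻ t, μ s * k t ∂μ := by
          simp_rw [setLIntegral_const, mul_comm (k _)]
          exact setLIntegral_le_lintegral _ _
      _ = μ s * ∫⁻ t, k t ∂μ := lintegral_const_mul'' _ hk

theorem one_add_abs_le_mul_one_add_abs_sub (x t : ℝ) : 1 + |t| ≤ (1 + |x|) * (1 + |x - t|) := by
  have : |t| ≤ |x| + |x - t| := by simpa using abs_sub x (x - t)
  nlinarith [abs_nonneg x, abs_nonneg (x - t)]

theorem abs_mul_abs_sub_le_of_decay {f g : ℝ → ℝ} {A D H : ℝ} {S m : ℕ}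
    (hf : ∀ t, |f t| ≤ A * (1 + |t|) ^ S) (hg : ∀ u, (1 + |u|) ^ (m + (S + 2)) * |g u| ≤ D)
    (hH : 0 ≤ H) {x t : ℝ} (hxt : H ≤ |x - t|) :
    |f t| * |g (x - t)| ≤ A * D * (1 + |x|) ^ (S + 2) / ((1 + H) ^ m * (1 + t ^ 2)) := by
  have hA : 0 ≤ A := nonneg_of_mul_nonneg_left ((abs_nonneg _).trans (hf 0)) (by positivity)
  have hgx : |g (x - t)| * ((1 + H) ^ m * (1 + |t|) ^ (S + 2)) ≤ D * (1 + |x|) ^ (S + 2) :=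
    calc |g (x - t)| * ((1 + H) ^ m * (1 + |t|) ^ (S + 2))
        ≤ |g (x - t)| * ((1 + |x - t|) ^ m * ((1 + |x|) * (1 + |x - t|)) ^ (S + 2)) := by
          gcongr
          exact one_add_abs_le_mul_one_add_abs_sub x t
      _ = (1 + |x|) ^ (S + 2) * ((1 + |x - t|) ^ (m + (S + 2)) * |g (x - t)|) := by
          rw [mul_pow, pow_add]; ring
      _ ≤ D * (1 + |x|) ^ (S + 2) := by rw [mul_comm D]; gcongr; exact hg _
  have hsq : 1 + t ^ 2 ≤ (1 + |t|) ^ 2 := by nlinarith [sq_abs t, abs_nonneg t]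
  rw [le_div_iff₀ (by positivity)]
  calc |f t| * |g (x - t)| * ((1 + H) ^ m * (1 + t ^ 2))
      ≤ A * (1 + |t|) ^ S * |g (x - t)| * ((1 + H) ^ m * (1 + |t|) ^ 2) := by
        gcongr
        exact hf t
    _ = A * (|g (x - t)| * ((1 + H) ^ m * (1 + |t|) ^ (S + 2))) := by ring
    _ ≤ A * D * (1 + |x|) ^ (S + 2) := by rw [mul_assoc]; gcongr

theorem mul_sub_le_integral_abs_mul_add_tail {R ψ : ℝ → ℝ} {A D H c a b X Y : ℝ} {S m : ℕ}
    (hR : LocallyIntegrable R) (hRA : ∀ t, |R t| ≤ A * (1 + |t|) ^ S)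
    (hψ : Continuous ψ) (hψi : Integrable ψ)
    (hψD : ∀ u, (1 + |u|) ^ (m + (S + 2)) * |ψ u| ≤ D)
    (hH : 0 ≤ H) (ha : 0 ≤ a) (hab : a ≤ b) (hXa : X + H ≤ a) (hbY : b + H ≤ Y) (hc : 0 ≤ c)
    (hlow : ∀ x ∈ Ioc a b, c ≤ |∫ t, R t * ψ (x - t)|) :
    c * (b - a) ≤ (∫ t in Ioc X Y, |R t|) * (∫ u, |ψ u|)
      + (b - a) * (A * D * (1 + Y) ^ (S + 2) / (1 + H) ^ m * π) := by
  set K := A * D * (1 + Y) ^ (S + 2) / (1 + H) ^ m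
  have hA : 0 ≤ A := nonneg_of_mul_nonneg_left ((abs_nonneg _).trans (hRA 0)) (by positivity)
  have hD : 0 ≤ D := le_trans (by positivity) (hψD 0)
  have hK : 0 ≤ K :=
    div_nonneg (mul_nonneg (mul_nonneg hA hD) (pow_nonneg (by linarith) _)) (by positivity)
  have hRI : IntegrableOn R (Ioc X Y) :=
    (hR.integrableOn_isCompact isCompact_Icc).mono_set Ioc_subset_Icc_self
  have hk : Integrable fun t : ℝ => K * (1 + t ^ 2)⁻¹ := integrable_inv_one_add_sq.const_mul K
  have htail : ∀ t ∉ Ioc X Y, ∀ x ∈ Ioc a b,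
      ‖R t‖ₑ * ‖ψ (x - t)‖ₑ ≤ ENNReal.ofReal (K * (1 + t ^ 2)⁻¹) := by
    intro t ht x ⟨hax, hxb⟩
    have hxt : H ≤ |x - t| := by
      rw [mem_Ioc, not_and_or, not_lt, not_le] at ht
      rcases ht with ht | ht
      · exact le_abs.2 (Or.inl (by linarith))
      · exact le_abs.2 (Or.inr (by linarith))
    rw [enorm_eq_ofReal_abs, enorm_eq_ofReal_abs, ← ENNReal.ofReal_mul (abs_nonneg _)]
    refine ENNReal.ofReal_le_ofReal ((abs_mul_abs_sub_le_of_decay hRA hψD hH hxt).trans ?_)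
    have hxY : |x| ≤ Y := by rw [abs_of_nonneg (by linarith)]; linarith
    calc A * D * (1 + |x|) ^ (S + 2) / ((1 + H) ^ m * (1 + t ^ 2))
        ≤ A * D * (1 + Y) ^ (S + 2) / ((1 + H) ^ m * (1 + t ^ 2)) := by gcongr
      _ = K * (1 + t ^ 2)⁻¹ := by rw [← div_div, div_eq_mul_inv]
  have hlower : ∀ x ∈ Ioc a b, ENNReal.ofReal c ≤ ∫⁻ t, ‖R t‖ₑ * ‖ψ (x - t)‖ₑ := fun x hx =>
    calc ENNReal.ofReal c ≤ ‖∫ t, R t * ψ (x - t)‖ₑ := by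
          rw [enorm_eq_ofReal_abs]; exact ENNReal.ofReal_le_ofReal (hlow x hx)
      _ ≤ ∫⁻ t, ‖R t‖ₑ * ‖ψ (x - t)‖ₑ :=
          (enorm_integral_le_lintegral_enorm _).trans_eq (lintegral_congr fun t => enorm_mul _ _)
  rw [← ENNReal.ofReal_le_ofReal_iff (by positivity)]
  calc ENNReal.ofReal (c * (b - a))
      = ∫⁻ _ in Ioc a b, ENNReal.ofReal c := by
        rw [setLIntegral_const, Real.volume_Ioc, ENNReal.ofReal_mul hc]
    _ ≤ ∫⁻ x in Ioc a b, ∫⁻ t, ‖R t‖ₑ * ‖ψ (x - t)‖ₑ :=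
        setLIntegral_mono' measurableSet_Ioc hlower
    _ ≤ (∫⁻ t in Ioc X Y, ‖R t‖ₑ) * (∫⁻ u, ‖ψ u‖ₑ)
          + volume (Ioc a b) * ∫⁻ t, ENNReal.ofReal (K * (1 + t ^ 2)⁻¹) :=
        lintegral_lintegral_sub_le hR.aestronglyMeasurable.enorm hψ.measurable.enorm
          hk.aemeasurable.ennreal_ofReal measurableSet_Ioc htail
    _ = ENNReal.ofReal ((∫ t in Ioc X Y, |R t|) * (∫ u, |ψ u|) + (b - a) * (K * π)) := by
        rw [← ofReal_integral_norm_eq_lintegral_enorm hRI,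
          ← ofReal_integral_norm_eq_lintegral_enorm hψi,
          ← ofReal_integral_eq_lintegral_ofReal hk (ae_of_all _ fun t => by positivity),
          integral_const_mul, integral_univ_inv_one_add_sq, Real.volume_Ioc,
          ← ENNReal.ofReal_mul (by positivity), ← ENNReal.ofReal_mul (by linarith),
          ← ENNReal.ofReal_add (by positivity) (by positivity)]
        simp only [Real.norm_eq_abs]

theorem rpow_le_pow_natCeil {x : ℝ} (hx : 1 ≤ x) (s : ℝ) : x ^ s ≤ x ^ ⌈s⌉₊ := by
  simpa using rpow_le_rpow_of_exponent_le hx (Nat.le_ceil s)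

theorem tendsto_one_add_add_rpow_pow_div_one_add_rpow_pow {β : ℝ} (hβ : 0 ≤ β) {n m : ℕ}
    (hnm : (1 + β) * n < β / 2 * m) :
    Tendsto (fun X : ℝ => (1 + (X + X ^ β)) ^ n / (1 + X ^ (β / 2)) ^ m) atTop (𝓝 0) := by
  have hlim : Tendsto (fun X : ℝ => 3 ^ n * X ^ (-(β / 2 * m - (1 + β) * n))) atTop (𝓝 0) := by
    simpa using (tendsto_rpow_neg_atTop (sub_pos.2 hnm)).const_mul (3 ^ n)
  refine squeeze_zero' ?_ ?_ hlim
  · filter_upwards [eventually_ge_atTop 0] with X hX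
    positivity
  filter_upwards [eventually_ge_atTop 1] with X hX
  have hX0 : 0 < X := by linarith
  have hsum : 1 + (X + X ^ β) ≤ 3 * X ^ (1 + β) := by
    have h1 := one_le_rpow hX (by linarith : 0 ≤ 1 + β)
    have h2 := rpow_le_rpow_of_exponent_le hX (by linarith : 1 ≤ 1 + β)
    have h3 := rpow_le_rpow_of_exponent_le hX (by linarith : β ≤ 1 + β)
    rw [rpow_one] at h2
    linarith
  calc (1 + (X + X ^ β)) ^ n / (1 + X ^ (β / 2)) ^ m
      ≤ (3 * X ^ (1 + β)) ^ n / (X ^ (β / 2)) ^ m := by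
        gcongr
        linarith
    _ = 3 ^ n * X ^ (-(β / 2 * m - (1 + β) * n)) := by
        rw [neg_sub, rpow_sub hX0, mul_pow, rpow_mul_natCast hX0.le, rpow_mul_natCast hX0.le,
          mul_div_assoc]

theorem mul_rpow_le_rpow_neg_mul_intervalIntegral_abs {R ψ : ℝ → ℝ} {A D C α β x₀ X : ℝ}
    {S m : ℕ} (hR : LocallyIntegrable R) (hRA : ∀ t, |R t| ≤ A * (1 + |t|) ^ S)
    (hψ : Continuous ψ) (hψi : Integrable ψ) (hψD : ∀ u, (1 + |u|) ^ (m + (S + 2)) * |ψ u| ≤ D)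
    (hα : 0 ≤ α) (hC : 0 < C) (hlow : ∀ x, x₀ < x → C * x ^ α ≤ |∫ t, R t * ψ (x - t)|)
    (hX : 1 ≤ X) (hXx₀ : x₀ < X) (hH : 4 ≤ X ^ (β / 2))
    (hK : A * D * (1 + (X + X ^ β)) ^ (S + 2) / (1 + X ^ (β / 2)) ^ m * π ≤ C / 2) :
    C / (4 * ((∫ u, |ψ u|) + 1)) * X ^ α ≤ X ^ (-β) * ∫ t in X..(X + X ^ β), |R t| := by
  set H := X ^ (β / 2)
  have hX0 : 0 < X := by linarith
  have hHH : X ^ β = H * H := by rw [← rpow_add hX0]; ring_nf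
  have hXα : 1 ≤ X ^ α := one_le_rpow hX hα
  have hM : 0 ≤ ∫ u, |ψ u| := integral_nonneg fun u => abs_nonneg _
  have hcore := mul_sub_le_integral_abs_mul_add_tail (c := C * X ^ α) (a := X + H)
    (b := X + X ^ β - H) (X := X) (Y := X + X ^ β) hR hRA hψ hψi hψD (by linarith) (by linarith)
    (by nlinarith) le_rfl (by linarith) (by positivity) fun x hx =>
      (mul_le_mul_of_nonneg_left (rpow_le_rpow hX0.le (by linarith [hx.1]) hα) hC.le).trans
        (hlow x (by linarith [hx.1]))
  rw [intervalIntegral.integral_of_le (by nlinarith), rpow_neg hX0.le, hHH]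
  rw [hHH] at hcore hK
  set J := ∫ t in Ioc X (X + H * H), |R t|
  set M := ∫ u, |ψ u|
  have hJ : 0 ≤ J := setIntegral_nonneg measurableSet_Ioc fun t _ => abs_nonneg _
  have key : C * X ^ α * (H * H) ≤ 4 * (J * M) := by
    have htail : (X + H * H - H - (X + H)) * (A * D * (1 + (X + H * H)) ^ (S + 2) / (1 + H) ^ m * π)
        ≤ (X + H * H - H - (X + H)) * (C * X ^ α / 2) :=
      mul_le_mul_of_nonneg_left (hK.trans (by nlinarith)) (by nlinarith)
    have hwidth : C * X ^ α * (H * H) ≤ C * X ^ α * (2 * (X + H * H - H - (X + H))) :=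
      mul_le_mul_of_nonneg_left (by nlinarith) (by positivity)
    linarith
  rw [inv_mul_eq_div, le_div_iff₀ (by positivity), div_mul_eq_mul_div, div_mul_eq_mul_div,
    div_le_iff₀ (by positivity)]
  nlinarith [mul_nonneg hJ hM]

theorem sarnak_calculus_lemma_short_intervals_general
    (R : ℝ → ℝ) (hR : LocallyIntegrable R volume)
    (s : ℝ)
    (hgrowth : ∃ C : ℝ, 0 < C ∧ ∀ t : ℝ, |R t| ≤ C * (1 + |t|) ^ s)
    (ψ : SchwartzMap ℝ ℝ)
    (α C x₀ : ℝ) (hα : 0 < α) (hC : 0 < C)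
    (hlow : ∀ x : ℝ, x₀ < x → C * x ^ α ≤ |∫ t : ℝ, R t * ψ (x - t)|)
    (β : ℝ) (hβ : 0 < β) :
    ∃ C' X₀ : ℝ, 0 < C' ∧ 0 < X₀ ∧
      ∀ X : ℝ, X₀ < X →
        C' * X ^ α ≤ X ^ (-β) * ∫ t in X..(X + X ^ β), |R t| := by
  obtain ⟨A, hA, hRs⟩ := hgrowth
  set S := ⌈s⌉₊
  have hRA (t : ℝ) : |R t| ≤ A * (1 + |t|) ^ S :=
    (hRs t).trans (by gcongr; exact rpow_le_pow_natCeil (le_add_of_nonneg_right (abs_nonneg t)) s)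
  obtain ⟨m, hm⟩ : ∃ m : ℕ, (1 + β) * ((S + 2 : ℕ) : ℝ) < β / 2 * m := by
    obtain ⟨m, hm⟩ := exists_nat_gt ((1 + β) * ((S + 2 : ℕ) : ℝ) / (β / 2))
    exact ⟨m, by rwa [div_lt_iff₀' (half_pos hβ)] at hm⟩
  obtain ⟨D, hD⟩ := ψ.exists_one_add_norm_pow_mul_norm_le (m + (S + 2))
  simp only [Real.norm_eq_abs] at hD
  have hK := ((tendsto_one_add_add_rpow_pow_div_one_add_rpow_pow hβ.le hm).const_mul
    (A * D)).mul_const π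
  rw [mul_zero, zero_mul] at hK
  have hev : ∀ᶠ X in atTop,
      C / (4 * ((∫ u, |ψ u|) + 1)) * X ^ α ≤ X ^ (-β) * ∫ t in X..(X + X ^ β), |R t| := by
    filter_upwards [eventually_ge_atTop 1, eventually_gt_atTop x₀,
      (tendsto_rpow_atTop (half_pos hβ)).eventually_ge_atTop 4,
      hK.eventually_le_const (half_pos hC)] with X hX hXx₀ hH hKX
    exact mul_rpow_le_rpow_neg_mul_intervalIntegral_abs hR hRA ψ.continuous ψ.integrable hD
      hα.le hC hlow hX hXx₀ hH (by simpa only [mul_div_assoc] using hKX)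
  obtain ⟨X₀, hX₀⟩ := eventually_atTop.1 hev
  have hM : 0 ≤ ∫ u, |ψ u| := integral_nonneg fun u => abs_nonneg _
  exact ⟨_, max X₀ 1, by positivity, by positivity,
    fun X hX => hX₀ X ((le_max_left _ _).trans hX.le)⟩

/-- Sarnak's calculus lemma on short intervals: the averaged lower bound holds over
intervals of length `X ^ β` for any `β > 0`. -/
theorem sarnak_calculus_lemma_short_intervals
    (R : ℝ → ℝ) (hR : LocallyIntegrable R volume)
    (s : ℝ) (hs : 0 < s)
    (hgrowth : ∃ C : ℝ, 0 < C ∧ ∀ t : ℝ, |R t| ≤ C * (1 + |t|) ^ s)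
    (ψ : SchwartzMap ℝ ℝ)
    (α C x₀ : ℝ) (hα : 0 < α) (hC : 0 < C) (hx₀ : 0 < x₀)
    (hlow : ∀ x : ℝ, x₀ < x → C * x ^ α ≤ |∫ t : ℝ, R t * ψ (x - t)|)
    (β : ℝ) (hβ : 0 < β) :
    ∃ C' X₀ : ℝ, 0 < C' ∧ 0 < X₀ ∧
      ∀ X : ℝ, X₀ < X →
        C' * X ^ α ≤ X ^ (-β) * ∫ t in X..(X + X ^ β), |R t| :=
  sarnak_calculus_lemma_short_intervals_general R hR s hgrowth ψ α C x₀ hα hC hlow β hβ
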